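/- arXiv:1808.02665 — 2 statements merged into one kernel-verified Lean document; each statement's English description precedes it below -/
import Mathlib

section
/- Let (Sₙ) be a simple random walk on ℤ with i.i.d. steps Zᵢ satisfying P(Zᵢ = 1) = p and P(Zᵢ = −1) = 1 − p, S₀ = 0, with p ≥ 1/2, and let k be a positive integer. Then P(∃ n ≥ 1, Sₙ = −k) = ((1−p)/p)^k. -/
set_option linter.unusedSectionVars false
open MeasureTheory ProbabilityTheory
open scoped ENNReal NNReal

namespace RWaux

variable {Ω : Type*} [MeasurableSpace Ω] (μ : Measure Ω) [IsProbabilityMeasure μ]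
  (Z : ℕ → Ω → ℤ) (k B : ℕ)

noncomputable def S (n : ℕ) (ω : Ω) : ℤ := ∑ i ∈ Finset.range n, Z i ω

def alive (n : ℕ) : Set Ω := {ω | ∀ m ≤ n, -(k:ℤ) < S Z m ω ∧ S Z m ω < (B:ℤ)}

def hitL (m : ℕ) : Set Ω := alive Z k B m ∩ {ω | S Z (m+1) ω = -(k:ℤ)}
def hitH (m : ℕ) : Set Ω := alive Z k B m ∩ {ω | S Z (m+1) ω = (B:ℤ)}

def filt (n : ℕ) : MeasurableSpace Ω := ⨆ i ∈ Set.Iio n, MeasurableSpace.comap (Z i) inferInstance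
def upfilt (n : ℕ) : MeasurableSpace Ω := ⨆ i ∈ Set.Ici n, MeasurableSpace.comap (Z i) inferInstance

variable {Z k B}

lemma S_succ (n : ℕ) (ω : Ω) : S Z (n+1) ω = S Z n ω + Z n ω := Finset.sum_range_succ _ _

lemma S_zero (ω : Ω) : S Z 0 ω = 0 := rfl

section meas
variable (hmeas : ∀ i, Measurable (Z i))

lemma filt_mono {m n : ℕ} (h : m ≤ n) : filt Z m ≤ filt Z n :=
  biSup_mono (fun _ hi => lt_of_lt_of_le hi h)

lemma Z_meas_filt {i n : ℕ} (h : i < n) : Measurable[filt Z n] (Z i) :=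
  measurable_iff_comap_le.2
    (le_biSup (fun j => MeasurableSpace.comap (Z j) inferInstance) (show i ∈ Set.Iio n from h))

lemma Z_meas_upfilt {i n : ℕ} (h : n ≤ i) : Measurable[upfilt Z n] (Z i) :=
  measurable_iff_comap_le.2
    (le_biSup (fun j => MeasurableSpace.comap (Z j) inferInstance) (show i ∈ Set.Ici n from h))

lemma S_meas_filt {m n : ℕ} (h : m ≤ n) : Measurable[filt Z n] (S Z m) := by
  apply Finset.measurable_sum
  intro i hi
  exact Z_meas_filt (lt_of_lt_of_le (Finset.mem_range.1 hi) h)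

lemma alive_meas_filt (n : ℕ) : MeasurableSet[filt Z n] (alive Z k B n) := by
  have : alive Z k B n = ⋂ m ∈ Set.Iic n, (S Z m) ⁻¹' {s : ℤ | -(k:ℤ) < s ∧ s < (B:ℤ)} := by
    ext ω; simp [alive, Set.mem_iInter]
  rw [this]
  exact MeasurableSet.biInter (Set.to_countable _)
    (fun m hm => S_meas_filt hm (MeasurableSet.of_discrete))

lemma hitL_meas_filt (m : ℕ) : MeasurableSet[filt Z (m+1)] (hitL Z k B m) := by
  apply @MeasurableSet.inter Ω (filt Z (m+1))
  · exact filt_mono (Nat.le_succ m) _ (alive_meas_filt m)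
  · exact S_meas_filt le_rfl (MeasurableSet.of_discrete : MeasurableSet {(-(k:ℤ))})

lemma hitH_meas_filt (m : ℕ) : MeasurableSet[filt Z (m+1)] (hitH Z k B m) := by
  apply @MeasurableSet.inter Ω (filt Z (m+1))
  · exact filt_mono (Nat.le_succ m) _ (alive_meas_filt m)
  · exact S_meas_filt le_rfl (MeasurableSet.of_discrete : MeasurableSet {((B:ℤ))})

include hmeas

lemma filt_le (n : ℕ) : filt Z n ≤ ‹MeasurableSpace Ω› :=
  iSup₂_le (fun i _ => (hmeas i).comap_le)

lemma alive_meas (n : ℕ) : MeasurableSet (alive Z k B n) :=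
  filt_le hmeas n _ (alive_meas_filt n)

lemma hitL_meas (m : ℕ) : MeasurableSet (hitL Z k B m) :=
  filt_le hmeas (m+1) _ (hitL_meas_filt m)

lemma hitH_meas (m : ℕ) : MeasurableSet (hitH Z k B m) :=
  filt_le hmeas (m+1) _ (hitH_meas_filt m)

lemma aSm_meas (n : ℕ) (t : ℤ) : MeasurableSet (alive Z k B n ∩ {ω | S Z n ω = t}) :=
  (alive_meas hmeas n).inter
    ((Finset.measurable_sum _ (fun i _ => hmeas i)) (MeasurableSet.of_discrete : MeasurableSet {t}))

end meas

section indep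
variable (hindep : iIndepFun Z μ) (hmeas : ∀ i, Measurable (Z i))
include hindep hmeas

lemma indep_mul {n : ℕ} {D E : Set Ω} (hD : MeasurableSet[filt Z n] D)
    (hE : MeasurableSet[upfilt Z n] E) : μ (D ∩ E) = μ D * μ E :=
  (Indep_iff _ _ μ).1
    (indep_iSup_of_disjoint (fun i => (hmeas i).comap_le) hindep (Set.Iio_disjoint_Ici le_rfl))
    D E hD hE

lemma step_prod (n : ℕ) (t v : ℤ) :
    μ ((alive Z k B n ∩ {ω | S Z n ω = t}) ∩ {ω | Z n ω = v})
      = μ (alive Z k B n ∩ {ω | S Z n ω = t}) * μ {ω | Z n ω = v} := by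
  refine indep_mul μ hindep hmeas (n := n) ?_ ?_
  · exact @MeasurableSet.inter Ω (filt Z n) _ _ (alive_meas_filt n)
      (S_meas_filt le_rfl (MeasurableSet.of_discrete : MeasurableSet {t}))
  · exact Z_meas_upfilt le_rfl (MeasurableSet.of_discrete : MeasurableSet {v})

variable (p : ℝ) (hone : ∀ i, μ {ω | Z i ω = 1} = ENNReal.ofReal p)
include hone

lemma meas_block (a L : ℕ) :
    μ (⋂ i ∈ Finset.Ico a (a+L), {ω | Z i ω = 1}) = ENNReal.ofReal p ^ L := by
  have h := hindep.measure_inter_preimage_eq_mul (Finset.Ico a (a+L))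
    (sets := fun _ => ({1} : Set ℤ)) (fun i _ => MeasurableSet.of_discrete)
  have heq : ∀ i : ℕ, Z i ⁻¹' ({1} : Set ℤ) = {ω | Z i ω = 1} := fun i => rfl
  simp only [heq] at h
  rw [h]
  rw [Finset.prod_congr rfl (fun i _ => hone i), Finset.prod_const, Nat.card_Ico]
  congr 1
  omega

end indep

section negp
variable (p : ℝ) (hp0 : 0 ≤ p) (hp1 : p ≤ 1) (hmeas : ∀ i, Measurable (Z i))
  (hvals : ∀ i, ∀ ω, Z i ω = 1 ∨ Z i ω = -1)
  (hone : ∀ i, μ {ω | Z i ω = 1} = ENNReal.ofReal p)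
include hp0 hp1 hmeas hvals hone

lemma meas_neg (i : ℕ) : μ {ω | Z i ω = -1} = ENNReal.ofReal (1 - p) := by
  have hdisj : Disjoint {ω | Z i ω = 1} {ω | Z i ω = (-1:ℤ)} := by
    rw [Set.disjoint_left]; intro ω h1 h2
    simp only [Set.mem_setOf_eq] at h1 h2; omega
  have hu : {ω | Z i ω = 1} ∪ {ω | Z i ω = (-1:ℤ)} = Set.univ := by
    ext ω; simpa using hvals i ω
  have hm1 : MeasurableSet {ω | Z i ω = (-1:ℤ)} :=
    (hmeas i) (MeasurableSet.of_discrete : MeasurableSet {(-1:ℤ)})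
  have := measure_union (μ := μ) hdisj hm1
  rw [hu, measure_univ, hone i] at this
  have h2 : ENNReal.ofReal p + ENNReal.ofReal (1-p) = 1 := by
    rw [← ENNReal.ofReal_add hp0 (by linarith), ENNReal.ofReal_eq_one.2 (by ring)]
  rw [← h2] at this
  exact (ENNReal.add_right_inj ENNReal.ofReal_ne_top).1 this.symm
end negp

section pure
variable (hk : 0 < k) (hB : 0 < B)

lemma alive_mono {m n : ℕ} (h : m ≤ n) : alive Z k B n ⊆ alive Z k B m :=
  fun _ hω m' hm' => hω m' (le_trans hm' h)

lemma alive_upper_mono {B' : ℕ} (h : B ≤ B') (n : ℕ) : alive Z k B n ⊆ alive Z k B' n :=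
  fun ω hω m hm => ⟨(hω m hm).1, lt_of_lt_of_le (hω m hm).2 (by exact_mod_cast h)⟩

include hk hB in
lemma alive_zero : alive Z k B 0 = Set.univ := by
  ext ω
  simp only [alive, Set.mem_setOf_eq, Set.mem_univ, iff_true]
  intro m hm
  interval_cases m
  simp only [S_zero]
  omega

lemma alive_succ (n : ℕ) :
    alive Z k B (n+1) = alive Z k B n ∩ {ω | -(k:ℤ) < S Z (n+1) ω ∧ S Z (n+1) ω < (B:ℤ)} := by
  ext ω
  simp only [alive, Set.mem_setOf_eq, Set.mem_inter_iff]
  constructor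
  · exact fun h => ⟨fun m hm => h m (le_trans hm (Nat.le_succ n)), h (n+1) le_rfl⟩
  · rintro ⟨h1, h2⟩ m hm
    rcases eq_or_lt_of_le hm with rfl | h
    · exact h2
    · exact h1 m (Nat.lt_succ_iff.1 h)

lemma S_mem_of_alive {n : ℕ} {ω} (h : ω ∈ alive Z k B n) :
    S Z n ω ∈ Finset.Icc (-(k:ℤ)+1) ((B:ℤ)-1) := by
  have := h n le_rfl
  rw [Finset.mem_Icc]
  omega

lemma aSm_empty {n : ℕ} {t : ℤ} (ht : t ∉ Finset.Icc (-(k:ℤ)+1) ((B:ℤ)-1)) :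
    alive Z k B n ∩ {ω | S Z n ω = t} = ∅ := by
  ext ω
  simp only [Set.mem_inter_iff, Set.mem_setOf_eq, Set.mem_empty_iff_false, iff_false, not_and]
  intro h1 h2
  exact ht (h2 ▸ S_mem_of_alive h1)

variable (hvals : ∀ i, ∀ ω, Z i ω = 1 ∨ Z i ω = -1)
include hvals

lemma S_le (n : ℕ) (ω : Ω) : S Z n ω ≤ (n:ℤ) := by
  induction n with
  | zero => simp [S_zero]
  | succ n ih =>
    have := S_succ (Z := Z) n ω
    have h2 := hvals n ω
    push_cast
    omega

lemma alive_succ_inter (n : ℕ) {t : ℤ} (ht : t ∈ Finset.Icc (-(k:ℤ)+1) ((B:ℤ)-1)) :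
    alive Z k B (n+1) ∩ {ω | S Z (n+1) ω = t}
      = ((alive Z k B n ∩ {ω | S Z n ω = t - 1}) ∩ {ω | Z n ω = 1})
        ∪ ((alive Z k B n ∩ {ω | S Z n ω = t + 1}) ∩ {ω | Z n ω = -1}) := by
  rw [Finset.mem_Icc] at ht
  ext ω
  simp only [alive_succ, Set.mem_inter_iff, Set.mem_union, Set.mem_setOf_eq]
  have hS := S_succ (Z := Z) n ω
  constructor
  · rintro ⟨⟨ha, _⟩, hst⟩
    rcases hvals n ω with h1 | h1
    · exact Or.inl ⟨⟨ha, by omega⟩, h1⟩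
    · exact Or.inr ⟨⟨ha, by omega⟩, h1⟩
  · rintro (⟨⟨ha, hSn⟩, hZ⟩ | ⟨⟨ha, hSn⟩, hZ⟩) <;>
      exact ⟨⟨ha, by omega⟩, by omega⟩

lemma hitL_eq (n : ℕ) :
    hitL Z k B n = (alive Z k B n ∩ {ω | S Z n ω = -(k:ℤ)+1}) ∩ {ω | Z n ω = -1} := by
  ext ω
  simp only [hitL, Set.mem_inter_iff, Set.mem_setOf_eq]
  have hS := S_succ (Z := Z) n ω
  constructor
  · rintro ⟨ha, hst⟩
    have hb := ha n le_rfl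
    rcases hvals n ω with h1 | h1
    · exact absurd h1 (by omega)
    · exact ⟨⟨ha, by omega⟩, h1⟩
  · rintro ⟨⟨ha, h2⟩, h3⟩
    exact ⟨ha, by omega⟩

include hk hB in
lemma hitH_eq (n : ℕ) :
    hitH Z k B n = (alive Z k B n ∩ {ω | S Z n ω = (B:ℤ)-1}) ∩ {ω | Z n ω = 1} := by
  ext ω
  simp only [hitH, Set.mem_inter_iff, Set.mem_setOf_eq]
  have hS := S_succ (Z := Z) n ω
  constructor
  · rintro ⟨ha, hst⟩
    have hb := ha n le_rfl
    rcases hvals n ω with h1 | h1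
    · exact ⟨⟨ha, by omega⟩, h1⟩
    · exact absurd h1 (by omega)
  · rintro ⟨⟨ha, h2⟩, h3⟩
    exact ⟨ha, by omega⟩

include hk hB in
lemma exit {ω : Ω} {n : ℕ} (h : ω ∉ alive Z k B n) :
    ∃ m, m < n ∧ ω ∈ hitL Z k B m ∪ hitH Z k B m := by
  classical
  have hex : ∃ m, ¬(-(k:ℤ) < S Z m ω ∧ S Z m ω < (B:ℤ)) := by
    by_contra hc
    push_neg at hc
    exact h (fun m _ => hc m)
  have hP : ¬(-(k:ℤ) < S Z (Nat.find hex) ω ∧ S Z (Nat.find hex) ω < (B:ℤ)) := Nat.find_spec hex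
  have hmin : ∀ j, j < Nat.find hex → (-(k:ℤ) < S Z j ω ∧ S Z j ω < (B:ℤ)) := by
    intro j hj
    have := Nat.find_min hex hj
    tauto
  have hm0pos : Nat.find hex ≠ 0 := by
    intro h0
    rw [h0] at hP
    exact hP (by simp only [S_zero]; omega)
  obtain ⟨m', hm'⟩ : ∃ m', Nat.find hex = m' + 1 := ⟨Nat.find hex - 1, by omega⟩
  have hma : ω ∈ alive Z k B m' := fun j hj => hmin j (by omega)
  have hm'n : m' + 1 ≤ n := by
    by_contra hgt
    exact h (fun j hj => hmin j (by omega))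
  have hb := hmin m' (by omega)
  rw [hm'] at hP
  push_neg at hP
  clear hm0pos hmin hm' h hex
  have hS : S Z (m'+1) ω = S Z m' ω + Z m' ω := S_succ m' ω
  rcases hvals m' ω with h1 | h1
  · have e2 : -(k:ℤ) < S Z (m'+1) ω := by omega
    have e3 := hP e2
    have e4 : S Z (m'+1) ω = (B:ℤ) := by omega
    exact ⟨m', by omega, Or.inr ⟨hma, e4⟩⟩
  · have e3 : ¬(-(k:ℤ) < S Z (m'+1) ω) := fun hlt => by
      have := hP hlt
      omega
    have e4 : S Z (m'+1) ω = -(k:ℤ) := by omega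
    exact ⟨m', by omega, Or.inl ⟨hma, e4⟩⟩

include hk hB in
lemma hit_not_alive {ω : Ω} {m : ℕ} (h : ω ∈ hitL Z k B m ∪ hitH Z k B m) {n : ℕ}
    (hn : m < n) : ω ∉ alive Z k B n := by
  intro ha
  have := ha (m+1) (by omega)
  rcases h with ⟨_, hs⟩ | ⟨_, hs⟩ <;> (simp only [Set.mem_setOf_eq] at hs; omega)

include hk hB in
lemma hit_pairwise_disj :
    Pairwise (fun m m' => Disjoint (hitL Z k B m ∪ hitH Z k B m)
      (hitL Z k B m' ∪ hitH Z k B m')) := by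
  have key : ∀ m m', m < m' → Disjoint (hitL Z k B m ∪ hitH Z k B m)
      (hitL Z k B m' ∪ hitH Z k B m') := by
    intro m m' hlt
    rw [Set.disjoint_left]
    intro ω hm hm'
    have ha : ω ∈ alive Z k B m' := by
      rcases hm' with ⟨ha', _⟩ | ⟨ha', _⟩ <;> exact ha'
    exact hit_not_alive hk hB hvals hm hlt ha
  intro m m' hne
  rcases lt_or_gt_of_ne hne with h | h
  · exact key m m' h
  · exact (key m' m h).symm

include hk hB in
lemma hitL_pairwise : Pairwise (Function.onFun Disjoint (hitL Z k B)) := by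
  intro m m' hne
  exact Set.disjoint_of_subset Set.subset_union_left Set.subset_union_left
    (hit_pairwise_disj hk hB hvals hne)

include hk hB in
lemma hitH_pairwise : Pairwise (Function.onFun Disjoint (hitH Z k B)) := by
  intro m m' hne
  exact Set.disjoint_of_subset Set.subset_union_right Set.subset_union_right
    (hit_pairwise_disj hk hB hvals hne)

include hk hB in
lemma hitLH_disj : Disjoint (⋃ m, hitL Z k B m) (⋃ m, hitH Z k B m) := by
  rw [Set.disjoint_left]
  simp only [Set.mem_iUnion]
  rintro ω ⟨m, hm⟩ ⟨m', hm'⟩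
  rcases eq_or_ne m m' with rfl | hne
  · have h1 := hm.2
    have h2 := hm'.2
    simp only [Set.mem_setOf_eq] at h1 h2
    omega
  · exact Set.disjoint_left.1 (hit_pairwise_disj hk hB hvals hne)
      (Set.mem_union_left _ hm) (Set.mem_union_right _ hm')

include hk hB in
lemma compl_aliveAll :
    ((⋃ m, hitL Z k B m) ∪ ⋃ m, hitH Z k B m) = (⋂ n, alive Z k B n)ᶜ := by
  ext ω
  simp only [Set.mem_union, Set.mem_iUnion, Set.mem_compl_iff, Set.mem_iInter]
  constructor
  · rintro (⟨m, hm⟩ | ⟨m, hm⟩) hall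
    · exact hit_not_alive hk hB hvals (Or.inl hm) (Nat.lt_succ_self m) (hall (m+1))
    · exact hit_not_alive hk hB hvals (Or.inr hm) (Nat.lt_succ_self m) (hall (m+1))
  · intro h
    push_neg at h
    obtain ⟨n, hn⟩ := h
    obtain ⟨m, _, hm | hm⟩ := exit hk hB hvals hn
    · exact Or.inl ⟨m, hm⟩
    · exact Or.inr ⟨m, hm⟩

omit hvals in
lemma S_add (a b : ℕ) (ω : Ω) :
    S Z (a+b) ω = S Z a ω + ∑ i ∈ Finset.Ico a (a+b), Z i ω := by
  rw [S, S, Finset.range_eq_Ico,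
    ← Finset.sum_Ico_consecutive _ (Nat.zero_le a) (Nat.le_add_right a b), Finset.range_eq_Ico]

end pure

section null
variable (p : ℝ) (hp0 : 0 < p) (hp1 : p ≤ 1)
  (hmeas : ∀ i, Measurable (Z i)) (hindep : iIndepFun Z μ)
  (hone : ∀ i, μ {ω | Z i ω = 1} = ENNReal.ofReal p) (hk : 0 < k) (hB : 0 < B)

lemma setZ_meas_filt {i n : ℕ} (h : i < n) (v : ℤ) :
    MeasurableSet[filt Z n] {ω | Z i ω = v} :=
  Z_meas_filt h (MeasurableSet.of_discrete : MeasurableSet {v})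

lemma setZ_meas_upfilt {i n : ℕ} (h : n ≤ i) (v : ℤ) :
    MeasurableSet[upfilt Z n] {ω | Z i ω = v} :=
  Z_meas_upfilt h (MeasurableSet.of_discrete : MeasurableSet {v})

include hp0 hp1 hmeas hindep hone hk hB in
lemma aliveAll_null : μ (⋂ n, alive Z k B n) = 0 := by
  set F : ℕ → Set Ω := fun j => ⋂ i ∈ Finset.Ico (j*(B+k)) (j*(B+k) + (B+k)), {ω | Z i ω = 1}
    with hFdef
  have hFμ : ∀ j, μ (F j) = ENNReal.ofReal p ^ (B+k) := fun j =>
    meas_block μ hindep hmeas p hone (j*(B+k)) (B+k)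
  have hsub : ∀ J : ℕ, (⋂ n, alive Z k B n) ⊆ ⋂ j ∈ Finset.range J, (F j)ᶜ := by
    intro J ω hω
    simp only [Set.mem_iInter] at hω
    simp only [Set.mem_iInter, Set.mem_compl_iff]
    intro j _ hF
    simp only [hFdef, Set.mem_iInter, Set.mem_setOf_eq] at hF
    have hsum : S Z (j*(B+k) + (B+k)) ω = S Z (j*(B+k)) ω + ((B+k : ℕ):ℤ) := by
      rw [S_add]
      congr 1
      rw [Finset.sum_congr rfl (fun i hi => hF i hi), Finset.sum_const, Nat.card_Ico]
      simp
    have h1 := hω (j*(B+k)) (j*(B+k)) le_rfl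
    have h2 := hω (j*(B+k) + (B+k)) (j*(B+k) + (B+k)) le_rfl
    push_cast at hsum
    omega
  have hDm : ∀ J, MeasurableSet[filt Z (J*(B+k))] (⋂ j ∈ Finset.range J, (F j)ᶜ) := by
    intro J
    refine MeasurableSet.biInter (Set.to_countable _) (fun j hj => MeasurableSet.compl ?_)
    refine MeasurableSet.biInter (Set.to_countable _) (fun i hi => ?_)
    have hjJ : j < J := Finset.mem_range.1 hj
    have hi2 : i < j * (B+k) + (B+k) := (Finset.mem_Ico.1 hi).2
    have hlt : i < J * (B+k) := by
      have he : j * (B+k) + (B+k) = (j+1) * (B+k) := by ring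
      have h3 : (j+1) * (B+k) ≤ J * (B+k) := Nat.mul_le_mul_right (B+k) hjJ
      omega
    exact setZ_meas_filt hlt 1
  have hFup : ∀ j, MeasurableSet[upfilt Z (j*(B+k))] (F j) := by
    intro j
    refine MeasurableSet.biInter (Set.to_countable _) (fun i hi => ?_)
    exact setZ_meas_upfilt (Finset.mem_Ico.1 hi).1 1
  have hFglob : ∀ j, MeasurableSet (F j) := by
    intro j
    refine MeasurableSet.biInter (Set.to_countable _) (fun i _ => ?_)
    exact (hmeas i) (MeasurableSet.of_discrete : MeasurableSet {(1:ℤ)})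
  have hrec : ∀ J, μ (⋂ j ∈ Finset.range J, (F j)ᶜ) ≤ (1 - ENNReal.ofReal p ^ (B+k)) ^ J := by
    intro J
    induction J with
    | zero => simp
    | succ J ih =>
      rw [Finset.range_add_one, Finset.set_biInter_insert, Set.inter_comm]
      have hind : μ ((⋂ j ∈ Finset.range J, (F j)ᶜ) ∩ (F J)ᶜ)
          = μ (⋂ j ∈ Finset.range J, (F j)ᶜ) * μ ((F J)ᶜ) :=
        indep_mul μ hindep hmeas (n := J*(B+k)) (hDm J) ((hFup J).compl)
      rw [hind]
      have hcompl : μ ((F J)ᶜ) = 1 - ENNReal.ofReal p ^ (B+k) := by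
        rw [prob_compl_eq_one_sub (hFglob J), hFμ J]
      rw [hcompl]
      exact mul_le_mul' ih le_rfl
  have hc1 : (1 - ENNReal.ofReal p ^ (B+k)) < 1 := by
    refine ENNReal.sub_lt_self ENNReal.one_ne_top one_ne_zero ?_
    exact pow_ne_zero _ (ENNReal.ofReal_pos.2 hp0).ne'
  have htend := ENNReal.tendsto_pow_atTop_nhds_zero_of_lt_one hc1
  have hle : ∀ J, μ (⋂ n, alive Z k B n) ≤ (1 - ENNReal.ofReal p ^ (B+k)) ^ J :=
    fun J => le_trans (measure_mono (hsub J)) (hrec J)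
  exact le_zero_iff.1 (ge_of_tendsto htend (Filter.Eventually.of_forall hle))

end null

section partition
variable (hmeas : ∀ i, Measurable (Z i)) (hvals : ∀ i, ∀ ω, Z i ω = 1 ∨ Z i ω = -1)
  (hk : 0 < k) (hB : 0 < B)
include hmeas hvals hk hB

lemma hit_partition (hnull : μ (⋂ n, alive Z k B n) = 0) :
    μ (⋃ m, hitL Z k B m) + μ (⋃ m, hitH Z k B m) = 1 := by
  have hm2 : MeasurableSet (⋃ m, hitH Z k B m) :=
    MeasurableSet.iUnion (fun m => hitH_meas hmeas m)
  rw [← measure_union (hitLH_disj hk hB hvals) hm2, compl_aliveAll hk hB hvals,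
    prob_compl_eq_one_sub (MeasurableSet.iInter (fun n => alive_meas hmeas n)), hnull, tsub_zero]

end partition

section alg

lemma phi_step_alg (hk : 0 < k) (hB : 0 < B) (P Q : ℝ≥0∞) (h a : ℤ → ℝ≥0∞)
    (hmart : ∀ t : ℤ, -(k:ℤ) < t → t < (B:ℤ) → P * h (t+1) + Q * h (t-1) = h t)
    (ha0 : ∀ t : ℤ, t ∉ Finset.Icc (-(k:ℤ)+1) ((B:ℤ)-1) → a t = 0) :
    (∑ t ∈ Finset.Icc (-(k:ℤ)+1) ((B:ℤ)-1), h t * (a (t-1) * P + a (t+1) * Q))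
      + (h (-(k:ℤ)) * (a (-(k:ℤ)+1) * Q) + h (B:ℤ) * (a ((B:ℤ)-1) * P))
      = ∑ t ∈ Finset.Icc (-(k:ℤ)+1) ((B:ℤ)-1), h t * a t := by
  have hIJ : Finset.Icc (-(k:ℤ)) (B:ℤ)
      = insert (-(k:ℤ)) (insert (B:ℤ) (Finset.Icc (-(k:ℤ)+1) ((B:ℤ)-1))) := by
    ext t
    simp only [Finset.mem_Icc, Finset.mem_insert]
    omega
  have hnot1 : (-(k:ℤ)) ∉ insert (B:ℤ) (Finset.Icc (-(k:ℤ)+1) ((B:ℤ)-1)) := by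
    simp only [Finset.mem_insert, Finset.mem_Icc]
    omega
  have hnot2 : (B:ℤ) ∉ Finset.Icc (-(k:ℤ)+1) ((B:ℤ)-1) := by
    simp only [Finset.mem_Icc]
    omega
  have habsorb : ∑ t ∈ Finset.Icc (-(k:ℤ)) (B:ℤ), h t * (a (t-1) * P + a (t+1) * Q)
      = (∑ t ∈ Finset.Icc (-(k:ℤ)+1) ((B:ℤ)-1), h t * (a (t-1) * P + a (t+1) * Q))
        + (h (-(k:ℤ)) * (a (-(k:ℤ)+1) * Q) + h (B:ℤ) * (a ((B:ℤ)-1) * P)) := by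
    rw [hIJ, Finset.sum_insert hnot1, Finset.sum_insert hnot2]
    have e1 : a (-(k:ℤ)-1) = 0 := ha0 _ (by simp only [Finset.mem_Icc]; omega)
    have e2 : a ((B:ℤ)+1) = 0 := ha0 _ (by simp only [Finset.mem_Icc]; omega)
    rw [e1, e2, zero_mul, zero_mul, zero_add, add_zero]
    ring
  have hsplit : ∑ t ∈ Finset.Icc (-(k:ℤ)) (B:ℤ), h t * (a (t-1) * P + a (t+1) * Q)
      = (∑ t ∈ Finset.Icc (-(k:ℤ)) (B:ℤ), h t * (a (t-1) * P))
        + ∑ t ∈ Finset.Icc (-(k:ℤ)) (B:ℤ), h t * (a (t+1) * Q) := by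
    rw [← Finset.sum_add_distrib]
    exact Finset.sum_congr rfl (fun t _ => by ring)
  have hshift1 : ∑ t ∈ Finset.Icc (-(k:ℤ)) (B:ℤ), h t * (a (t-1) * P)
      = ∑ u ∈ Finset.Icc (-(k:ℤ)-1) ((B:ℤ)-1), h (u+1) * (a u * P) := by
    refine Finset.sum_bij' (fun t _ => t - 1) (fun u _ => u + 1) ?_ ?_ ?_ ?_ ?_ <;>
      intro t ht <;>
      first
        | (simp only [Finset.mem_Icc] at *; omega)
        | (have ht1 : t - 1 + 1 = t := by omega
           rw [ht1])
  have hshift2 : ∑ t ∈ Finset.Icc (-(k:ℤ)) (B:ℤ), h t * (a (t+1) * Q)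
      = ∑ u ∈ Finset.Icc (-(k:ℤ)+1) ((B:ℤ)+1), h (u-1) * (a u * Q) := by
    refine Finset.sum_bij' (fun t _ => t + 1) (fun u _ => u - 1) ?_ ?_ ?_ ?_ ?_ <;>
      intro t ht <;>
      first
        | (simp only [Finset.mem_Icc] at *; omega)
        | (have ht1 : t + 1 - 1 = t := by omega
           rw [ht1])
  have hsup1 : ∑ u ∈ Finset.Icc (-(k:ℤ)-1) ((B:ℤ)-1), h (u+1) * (a u * P)
      = ∑ u ∈ Finset.Icc (-(k:ℤ)+1) ((B:ℤ)-1), h (u+1) * (a u * P) := by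
    symm
    refine Finset.sum_subset ?_ ?_
    · intro x hx
      simp only [Finset.mem_Icc] at *
      omega
    · intro x _ hnx
      rw [ha0 x hnx, zero_mul, mul_zero]
  have hsup2 : ∑ u ∈ Finset.Icc (-(k:ℤ)+1) ((B:ℤ)+1), h (u-1) * (a u * Q)
      = ∑ u ∈ Finset.Icc (-(k:ℤ)+1) ((B:ℤ)-1), h (u-1) * (a u * Q) := by
    symm
    refine Finset.sum_subset ?_ ?_
    · intro x hx
      simp only [Finset.mem_Icc] at *
      omega
    · intro x _ hnx
      rw [ha0 x hnx, zero_mul, mul_zero]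
  have hfinal : ∑ u ∈ Finset.Icc (-(k:ℤ)+1) ((B:ℤ)-1),
      (h (u+1) * (a u * P) + h (u-1) * (a u * Q))
      = ∑ u ∈ Finset.Icc (-(k:ℤ)+1) ((B:ℤ)-1), h u * a u := by
    refine Finset.sum_congr rfl (fun u hu => ?_)
    rw [Finset.mem_Icc] at hu
    have hm := hmart u (by omega) (by omega)
    calc h (u+1) * (a u * P) + h (u-1) * (a u * Q)
        = (P * h (u+1) + Q * h (u-1)) * a u := by ring
      _ = h u * a u := by rw [hm]
  calc (∑ t ∈ Finset.Icc (-(k:ℤ)+1) ((B:ℤ)-1), h t * (a (t-1) * P + a (t+1) * Q))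
      + (h (-(k:ℤ)) * (a (-(k:ℤ)+1) * Q) + h (B:ℤ) * (a ((B:ℤ)-1) * P))
      = ∑ t ∈ Finset.Icc (-(k:ℤ)) (B:ℤ), h t * (a (t-1) * P + a (t+1) * Q) := habsorb.symm
    _ = (∑ u ∈ Finset.Icc (-(k:ℤ)+1) ((B:ℤ)-1), h (u+1) * (a u * P))
        + ∑ u ∈ Finset.Icc (-(k:ℤ)+1) ((B:ℤ)-1), h (u-1) * (a u * Q) := by
        rw [hsplit, hshift1, hshift2, hsup1, hsup2]
    _ = ∑ u ∈ Finset.Icc (-(k:ℤ)+1) ((B:ℤ)-1),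
        (h (u+1) * (a u * P) + h (u-1) * (a u * Q)) := (Finset.sum_add_distrib).symm
    _ = ∑ u ∈ Finset.Icc (-(k:ℤ)+1) ((B:ℤ)-1), h u * a u := hfinal

end alg

section phi
variable (p : ℝ) (hp0 : 0 ≤ p) (hp1 : p ≤ 1)
  (hmeas : ∀ i, Measurable (Z i)) (hindep : iIndepFun Z μ)
  (hvals : ∀ i, ∀ ω, Z i ω = 1 ∨ Z i ω = -1)
  (hone : ∀ i, μ {ω | Z i ω = 1} = ENNReal.ofReal p)
  (hk : 0 < k) (hB : 0 < B)
include hp0 hp1 hmeas hindep hvals hone hk hB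

lemma phi (h : ℤ → ℝ≥0∞)
    (hmart : ∀ t : ℤ, -(k:ℤ) < t → t < (B:ℤ) →
      ENNReal.ofReal p * h (t+1) + ENNReal.ofReal (1-p) * h (t-1) = h t) (n : ℕ) :
    (∑ t ∈ Finset.Icc (-(k:ℤ)+1) ((B:ℤ)-1), h t * μ (alive Z k B n ∩ {ω | S Z n ω = t}))
      + ∑ m ∈ Finset.range n, (h (-(k:ℤ)) * μ (hitL Z k B m) + h (B:ℤ) * μ (hitH Z k B m))
      = h 0 := by
  induction n with
  | zero =>
    rw [Finset.range_zero, Finset.sum_empty, add_zero]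
    rw [Finset.sum_eq_single_of_mem 0 (by simp only [Finset.mem_Icc]; omega)]
    · rw [alive_zero hk hB]
      have huniv : (Set.univ ∩ {ω : Ω | S Z 0 ω = 0}) = Set.univ := by
        ext ω
        simp [S_zero]
      rw [huniv, measure_univ, mul_one]
    · intro t _ hne
      rw [alive_zero hk hB]
      have hempty : (Set.univ ∩ {ω : Ω | S Z 0 ω = t}) = ∅ := by
        ext ω
        simp only [Set.univ_inter, Set.mem_setOf_eq, Set.mem_empty_iff_false, iff_false, S_zero]
        exact fun h0 => hne h0.symm
      rw [hempty, measure_empty, mul_zero]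
  | succ n ih =>
    have hstep : ∀ t ∈ Finset.Icc (-(k:ℤ)+1) ((B:ℤ)-1),
        μ (alive Z k B (n+1) ∩ {ω | S Z (n+1) ω = t})
          = μ (alive Z k B n ∩ {ω | S Z n ω = t-1}) * ENNReal.ofReal p
            + μ (alive Z k B n ∩ {ω | S Z n ω = t+1}) * ENNReal.ofReal (1-p) := by
      intro t ht
      rw [alive_succ_inter hvals n ht]
      have hdisj : Disjoint ((alive Z k B n ∩ {ω | S Z n ω = t - 1}) ∩ {ω | Z n ω = 1})
          ((alive Z k B n ∩ {ω | S Z n ω = t + 1}) ∩ {ω | Z n ω = -1}) := by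
        rw [Set.disjoint_left]
        rintro ω ⟨_, h1⟩ ⟨_, h2⟩
        simp only [Set.mem_setOf_eq] at h1 h2
        omega
      have hm2 : MeasurableSet ((alive Z k B n ∩ {ω | S Z n ω = t + 1}) ∩ {ω | Z n ω = -1}) :=
        (aSm_meas hmeas n (t+1)).inter
          ((hmeas n) (MeasurableSet.of_discrete : MeasurableSet {(-1:ℤ)}))
      rw [measure_union hdisj hm2, step_prod μ hindep hmeas n (t-1) 1,
        step_prod μ hindep hmeas n (t+1) (-1), hone n,
        meas_neg μ p hp0 hp1 hmeas hvals hone n]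
    have hL : μ (hitL Z k B n)
        = μ (alive Z k B n ∩ {ω | S Z n ω = -(k:ℤ)+1}) * ENNReal.ofReal (1-p) := by
      rw [hitL_eq hvals n, step_prod μ hindep hmeas n _ (-1),
        meas_neg μ p hp0 hp1 hmeas hvals hone n]
    have hH : μ (hitH Z k B n)
        = μ (alive Z k B n ∩ {ω | S Z n ω = (B:ℤ)-1}) * ENNReal.ofReal p := by
      rw [hitH_eq hk hB hvals n, step_prod μ hindep hmeas n _ 1, hone n]
    rw [Finset.sum_range_succ]
    have hsum1 : ∑ t ∈ Finset.Icc (-(k:ℤ)+1) ((B:ℤ)-1),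
        h t * μ (alive Z k B (n+1) ∩ {ω | S Z (n+1) ω = t})
        = ∑ t ∈ Finset.Icc (-(k:ℤ)+1) ((B:ℤ)-1),
          h t * (μ (alive Z k B n ∩ {ω | S Z n ω = t-1}) * ENNReal.ofReal p
            + μ (alive Z k B n ∩ {ω | S Z n ω = t+1}) * ENNReal.ofReal (1-p)) :=
      Finset.sum_congr rfl (fun t ht => by rw [hstep t ht])
    rw [hsum1, hL, hH]
    have halg := phi_step_alg (k := k) (B := B) hk hB (ENNReal.ofReal p) (ENNReal.ofReal (1-p)) h
      (fun t => μ (alive Z k B n ∩ {ω | S Z n ω = t})) hmart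
      (fun t ht => by
        show μ (alive Z k B n ∩ {ω | S Z n ω = t}) = 0
        rw [aSm_empty ht, measure_empty])
    have hrearr : ∀ X Y U V W : ℝ≥0∞, X + (Y + (U + V)) = (X + (U + V)) + Y := by
      intro X Y U V W
      ring
    calc (∑ t ∈ Finset.Icc (-(k:ℤ)+1) ((B:ℤ)-1),
          h t * (μ (alive Z k B n ∩ {ω | S Z n ω = t-1}) * ENNReal.ofReal p
            + μ (alive Z k B n ∩ {ω | S Z n ω = t+1}) * ENNReal.ofReal (1-p)))
        + (∑ m ∈ Finset.range n, (h (-(k:ℤ)) * μ (hitL Z k B m) + h (B:ℤ) * μ (hitH Z k B m))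
          + (h (-(k:ℤ)) * (μ (alive Z k B n ∩ {ω | S Z n ω = -(k:ℤ)+1}) * ENNReal.ofReal (1-p))
            + h (B:ℤ) * (μ (alive Z k B n ∩ {ω | S Z n ω = (B:ℤ)-1}) * ENNReal.ofReal p)))
        = ((∑ t ∈ Finset.Icc (-(k:ℤ)+1) ((B:ℤ)-1),
            h t * (μ (alive Z k B n ∩ {ω | S Z n ω = t-1}) * ENNReal.ofReal p
              + μ (alive Z k B n ∩ {ω | S Z n ω = t+1}) * ENNReal.ofReal (1-p)))
          + (h (-(k:ℤ)) * (μ (alive Z k B n ∩ {ω | S Z n ω = -(k:ℤ)+1}) * ENNReal.ofReal (1-p))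
            + h (B:ℤ) * (μ (alive Z k B n ∩ {ω | S Z n ω = (B:ℤ)-1}) * ENNReal.ofReal p)))
          + ∑ m ∈ Finset.range n, (h (-(k:ℤ)) * μ (hitL Z k B m) + h (B:ℤ) * μ (hitH Z k B m)) := by
          ring
      _ = (∑ t ∈ Finset.Icc (-(k:ℤ)+1) ((B:ℤ)-1),
            h t * μ (alive Z k B n ∩ {ω | S Z n ω = t}))
          + ∑ m ∈ Finset.range n, (h (-(k:ℤ)) * μ (hitL Z k B m) + h (B:ℤ) * μ (hitH Z k B m)) := by
          rw [halg]
      _ = h 0 := ih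

end phi

section oslimit
variable (hmeas : ∀ i, Measurable (Z i))
  (hvals : ∀ i, ∀ ω, Z i ω = 1 ∨ Z i ω = -1) (hk : 0 < k) (hB : 0 < B)
include hmeas hvals hk hB

lemma os_limit (hnull : μ (⋂ n, alive Z k B n) = 0)
    (h : ℤ → ℝ≥0∞) (C : ℝ≥0∞) (hC : C ≠ ∞)
    (hb : ∀ t ∈ Finset.Icc (-(k:ℤ)+1) ((B:ℤ)-1), h t ≤ C)
    (hfinL : h (-(k:ℤ)) ≠ ∞) (hfinH : h (B:ℤ) ≠ ∞)
    (hphi : ∀ n, (∑ t ∈ Finset.Icc (-(k:ℤ)+1) ((B:ℤ)-1),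
        h t * μ (alive Z k B n ∩ {ω | S Z n ω = t}))
      + ∑ m ∈ Finset.range n, (h (-(k:ℤ)) * μ (hitL Z k B m) + h (B:ℤ) * μ (hitH Z k B m))
      = h 0) :
    h (-(k:ℤ)) * μ (⋃ m, hitL Z k B m) + h (B:ℤ) * μ (⋃ m, hitH Z k B m) = h 0 := by
  have hTfirst : Filter.Tendsto (fun n => ∑ t ∈ Finset.Icc (-(k:ℤ)+1) ((B:ℤ)-1),
      h t * μ (alive Z k B n ∩ {ω | S Z n ω = t})) Filter.atTop (nhds 0) := by
    have hub : ∀ n, (∑ t ∈ Finset.Icc (-(k:ℤ)+1) ((B:ℤ)-1),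
        h t * μ (alive Z k B n ∩ {ω | S Z n ω = t})) ≤ C * μ (alive Z k B n) := by
      intro n
      have hdisj2 : Set.PairwiseDisjoint ((Finset.Icc (-(k:ℤ)+1) ((B:ℤ)-1)) : Set ℤ)
          (fun t => alive Z k B n ∩ {ω | S Z n ω = t}) := by
        intro t1 _ t2 _ hne
        rw [Function.onFun, Set.disjoint_left]
        rintro ω ⟨_, h1⟩ ⟨_, h2⟩
        simp only [Set.mem_setOf_eq] at h1 h2
        omega
      have hsum : ∑ t ∈ Finset.Icc (-(k:ℤ)+1) ((B:ℤ)-1), μ (alive Z k B n ∩ {ω | S Z n ω = t})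
          = μ (⋃ t ∈ Finset.Icc (-(k:ℤ)+1) ((B:ℤ)-1), alive Z k B n ∩ {ω | S Z n ω = t}) :=
        (measure_biUnion_finset hdisj2 (fun t _ => aSm_meas hmeas n t)).symm
      calc ∑ t ∈ Finset.Icc (-(k:ℤ)+1) ((B:ℤ)-1), h t * μ (alive Z k B n ∩ {ω | S Z n ω = t})
          ≤ ∑ t ∈ Finset.Icc (-(k:ℤ)+1) ((B:ℤ)-1), C * μ (alive Z k B n ∩ {ω | S Z n ω = t}) :=
            Finset.sum_le_sum (fun t ht => mul_le_mul_left (hb t ht) _)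
        _ = C * ∑ t ∈ Finset.Icc (-(k:ℤ)+1) ((B:ℤ)-1), μ (alive Z k B n ∩ {ω | S Z n ω = t}) :=
            (Finset.mul_sum _ _ _).symm
        _ ≤ C * μ (alive Z k B n) := by
            rw [hsum]
            exact mul_le_mul_right (measure_mono (by
              intro ω hω
              simp only [Set.mem_iUnion] at hω
              obtain ⟨t, _, ht2⟩ := hω
              exact ht2.1)) C
    have hmu : Filter.Tendsto (fun n => μ (alive Z k B n)) Filter.atTop
        (nhds (μ (⋂ n, alive Z k B n))) :=
      tendsto_measure_iInter_atTop (fun n => (alive_meas hmeas n).nullMeasurableSet)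
        (fun a b hab => alive_mono hab) ⟨0, measure_ne_top μ _⟩
    rw [hnull] at hmu
    have hCmu : Filter.Tendsto (fun n => C * μ (alive Z k B n)) Filter.atTop (nhds 0) := by
      have := ENNReal.Tendsto.const_mul hmu (Or.inr hC)
      simpa using this
    exact tendsto_of_tendsto_of_tendsto_of_le_of_le tendsto_const_nhds hCmu
      (fun n => zero_le) hub
  have hTL : Filter.Tendsto (fun n => ∑ m ∈ Finset.range n, μ (hitL Z k B m)) Filter.atTop
      (nhds (μ (⋃ m, hitL Z k B m))) := by
    rw [measure_iUnion (hitL_pairwise hk hB hvals) (fun m => hitL_meas hmeas m)]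
    exact ENNReal.tendsto_nat_tsum _
  have hTH : Filter.Tendsto (fun n => ∑ m ∈ Finset.range n, μ (hitH Z k B m)) Filter.atTop
      (nhds (μ (⋃ m, hitH Z k B m))) := by
    rw [measure_iUnion (hitH_pairwise hk hB hvals) (fun m => hitH_meas hmeas m)]
    exact ENNReal.tendsto_nat_tsum _
  have hTsecond : Filter.Tendsto (fun n => ∑ m ∈ Finset.range n,
      (h (-(k:ℤ)) * μ (hitL Z k B m) + h (B:ℤ) * μ (hitH Z k B m))) Filter.atTop
      (nhds (h (-(k:ℤ)) * μ (⋃ m, hitL Z k B m) + h (B:ℤ) * μ (⋃ m, hitH Z k B m))) := by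
    have heq : ∀ n, ∑ m ∈ Finset.range n,
        (h (-(k:ℤ)) * μ (hitL Z k B m) + h (B:ℤ) * μ (hitH Z k B m))
        = h (-(k:ℤ)) * ∑ m ∈ Finset.range n, μ (hitL Z k B m)
          + h (B:ℤ) * ∑ m ∈ Finset.range n, μ (hitH Z k B m) := by
      intro n
      rw [Finset.sum_add_distrib, Finset.mul_sum, Finset.mul_sum]
    exact Filter.Tendsto.congr (fun n => (heq n).symm)
      ((ENNReal.Tendsto.const_mul hTL (Or.inr hfinL)).add
        (ENNReal.Tendsto.const_mul hTH (Or.inr hfinH)))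
  have hconst : Filter.Tendsto (fun n => (∑ t ∈ Finset.Icc (-(k:ℤ)+1) ((B:ℤ)-1),
      h t * μ (alive Z k B n ∩ {ω | S Z n ω = t}))
      + ∑ m ∈ Finset.range n, (h (-(k:ℤ)) * μ (hitL Z k B m) + h (B:ℤ) * μ (hitH Z k B m)))
      Filter.atTop (nhds (h 0)) := by
    simp only [hphi]
    exact tendsto_const_nhds
  have huniq := tendsto_nhds_unique (Filter.Tendsto.add hTfirst hTsecond) hconst
  rw [zero_add] at huniq
  exact huniq

end oslimit

section instLemmas
variable (p : ℝ) (hp : 1/2 ≤ p) (hp1 : p ≤ 1)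
  (hmeas : ∀ i, Measurable (Z i)) (hindep : iIndepFun Z μ)
  (hvals : ∀ i, ∀ ω, Z i ω = 1 ∨ Z i ω = -1)
  (hone : ∀ i, μ {ω | Z i ω = 1} = ENNReal.ofReal p)
  (hk : 0 < k) (hB : 0 < B)
include hp hp1 hmeas hindep hvals hone hk hB

lemma hitL_r_eq :
    μ (⋃ m, hitL Z k B m)
      + (ENNReal.ofReal ((1-p)/p))^(B+k) * μ (⋃ m, hitH Z k B m)
      = (ENNReal.ofReal ((1-p)/p))^k := by
  have hp0 : (0:ℝ) < p := by linarith
  have hq0 : (0:ℝ) ≤ (1-p)/p := div_nonneg (by linarith) hp0.le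
  set r : ℝ≥0∞ := ENNReal.ofReal ((1-p)/p) with hrdef
  have hr1 : r ≤ 1 := ENNReal.ofReal_le_one.2 (by rw [div_le_one hp0]; linarith)
  set h : ℤ → ℝ≥0∞ := fun t => r ^ (t + (k:ℤ)).toNat with hh
  have hmart : ∀ t : ℤ, -(k:ℤ) < t → t < (B:ℤ) →
      ENNReal.ofReal p * h (t+1) + ENNReal.ofReal (1-p) * h (t-1) = h t := by
    intro t ht1 ht2
    obtain ⟨m, hm⟩ : ∃ m : ℕ, (t + (k:ℤ)).toNat = m + 1 := ⟨(t+(k:ℤ)).toNat - 1, by omega⟩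
    have e1 : ((t+1) + (k:ℤ)).toNat = m + 2 := by omega
    have e2 : ((t-1) + (k:ℤ)).toNat = m := by omega
    show ENNReal.ofReal p * r ^ ((t+1) + (k:ℤ)).toNat
      + ENNReal.ofReal (1-p) * r ^ ((t-1)+(k:ℤ)).toNat = r ^ (t+(k:ℤ)).toNat
    rw [e1, e2, hm]
    have key : ENNReal.ofReal p * (r * r) + ENNReal.ofReal (1 - p) = r := by
      rw [hrdef, ← ENNReal.ofReal_mul hq0, ← ENNReal.ofReal_mul hp0.le,
        ← ENNReal.ofReal_add (mul_nonneg hp0.le (mul_nonneg hq0 hq0)) (by linarith)]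
      congr 1
      field_simp
      ring
    calc ENNReal.ofReal p * r^(m+2) + ENNReal.ofReal (1-p) * r^m
        = (ENNReal.ofReal p * (r*r) + ENNReal.ofReal (1-p)) * r^m := by ring
      _ = r * r^m := by rw [key]
      _ = r^(m+1) := by rw [pow_succ]; ring
  have e0 : h (-(k:ℤ)) = 1 := by
    show r ^ ((-(k:ℤ))+(k:ℤ)).toNat = 1
    rw [show ((-(k:ℤ))+(k:ℤ)).toNat = 0 from by omega, pow_zero]
  have eB : h (B:ℤ) = r^(B+k) := by
    show r ^ (((B:ℤ))+(k:ℤ)).toNat = _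
    rw [show (((B:ℤ))+(k:ℤ)).toNat = B + k from by omega]
  have ek : h (0:ℤ) = r^k := by
    show r ^ ((0:ℤ)+(k:ℤ)).toNat = _
    rw [show ((0:ℤ)+(k:ℤ)).toNat = k from by omega]
  have hrtop : r ≠ ∞ := ENNReal.ofReal_ne_top
  have hphi := phi μ p hp0.le hp1 hmeas hindep hvals hone hk hB h hmart
  have hnull := aliveAll_null μ p hp0 hp1 hmeas hindep hone hk hB
  have hos := os_limit μ hmeas hvals hk hB hnull h 1 ENNReal.one_ne_top
    (fun t _ => pow_le_one' hr1 _) (by rw [e0]; exact ENNReal.one_ne_top)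
    (by rw [eB]; exact ENNReal.pow_ne_top hrtop) hphi
  rw [e0, eB, ek, one_mul] at hos
  exact hos

lemma hitH_half (hphalf : p = 1/2) :
    μ (⋃ m, hitH Z k B m) = (k : ℝ≥0∞) / ((B+k : ℕ) : ℝ≥0∞) := by
  set h : ℤ → ℝ≥0∞ := fun t => ((t + (k:ℤ)).toNat : ℝ≥0∞) with hh
  have hmart : ∀ t : ℤ, -(k:ℤ) < t → t < (B:ℤ) →
      ENNReal.ofReal p * h (t+1) + ENNReal.ofReal (1-p) * h (t-1) = h t := by
    intro t ht1 ht2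
    obtain ⟨m, hm⟩ : ∃ m : ℕ, (t + (k:ℤ)).toNat = m + 1 := ⟨(t+(k:ℤ)).toNat - 1, by omega⟩
    have e1 : ((t+1) + (k:ℤ)).toNat = m + 2 := by omega
    have e2 : ((t-1) + (k:ℤ)).toNat = m := by omega
    show ENNReal.ofReal p * ((((t+1) + (k:ℤ)).toNat : ℕ) : ℝ≥0∞)
      + ENNReal.ofReal (1-p) * ((((t-1)+(k:ℤ)).toNat : ℕ) : ℝ≥0∞)
      = (((t+(k:ℤ)).toNat : ℕ) : ℝ≥0∞)
    rw [e1, e2, hm, hphalf, show (1:ℝ) - 1/2 = 1/2 from by norm_num]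
    push_cast
    rw [← mul_add, show ((m:ℝ≥0∞) + 2) + (m:ℝ≥0∞) = 2 * ((m:ℝ≥0∞) + 1) from by ring,
      ← mul_assoc]
    have h2 : ENNReal.ofReal (1/2) * 2 = 1 := by
      rw [show (2:ℝ≥0∞) = ENNReal.ofReal 2 from by simp,
        ← ENNReal.ofReal_mul (by norm_num)]
      norm_num
    rw [h2, one_mul]
  have e0 : h (-(k:ℤ)) = 0 := by
    show ((((-(k:ℤ))+(k:ℤ)).toNat : ℕ) : ℝ≥0∞) = 0
    rw [show ((-(k:ℤ))+(k:ℤ)).toNat = 0 from by omega]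
    simp
  have eB : h (B:ℤ) = ((B+k : ℕ) : ℝ≥0∞) := by
    show ((((B:ℤ)+(k:ℤ)).toNat : ℕ) : ℝ≥0∞) = _
    rw [show (((B:ℤ))+(k:ℤ)).toNat = B + k from by omega]
  have ek : h (0:ℤ) = (k : ℝ≥0∞) := by
    show ((((0:ℤ)+(k:ℤ)).toNat : ℕ) : ℝ≥0∞) = _
    rw [show ((0:ℤ)+(k:ℤ)).toNat = k from by omega]
  have hp0 : (0:ℝ) < p := by linarith
  have hphi := phi μ p hp0.le hp1 hmeas hindep hvals hone hk hB h hmart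
  have hnull := aliveAll_null μ p hp0 hp1 hmeas hindep hone hk hB
  have hos := os_limit μ hmeas hvals hk hB hnull h ((B+k : ℕ) : ℝ≥0∞)
    (ENNReal.natCast_ne_top _)
    (fun t ht => by
      show ((((t)+(k:ℤ)).toNat : ℕ) : ℝ≥0∞) ≤ _
      rw [Finset.mem_Icc] at ht
      exact Nat.cast_le.2 (by omega))
    (by rw [e0]; exact ENNReal.zero_ne_top)
    (by rw [eB]; exact ENNReal.natCast_ne_top _) hphi
  rw [e0, eB, ek, zero_mul, zero_add] at hos
  exact (ENNReal.eq_div_iff (Nat.cast_ne_zero.2 (by omega))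
    (ENNReal.natCast_ne_top _)).2 hos

end instLemmas

section final
variable (hvals : ∀ i, ∀ ω, Z i ω = 1 ∨ Z i ω = -1) (hk : 0 < k)
include hvals hk

lemma A_eq_union :
    {ω : Ω | ∃ n : ℕ, 1 ≤ n ∧ S Z n ω = -(k:ℤ)}
      = ⋃ N : ℕ, ⋃ m, hitL Z k (N+1) m := by
  ext ω
  simp only [Set.mem_setOf_eq, Set.mem_iUnion]
  constructor
  · rintro ⟨n, hn1, hn2⟩
    have hnot : ω ∉ alive Z k (n+1) n := by
      intro ha
      have := (ha n le_rfl).1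
      omega
    obtain ⟨m, hmn, hm⟩ := exit hk (by omega) hvals hnot
    rcases hm with hm | hm
    · exact ⟨n, m, hm⟩
    · exfalso
      have hle := S_le hvals (m+1) ω
      have hS := hm.2
      simp only [Set.mem_setOf_eq] at hS
      rw [hS] at hle
      have : ((n:ℤ)+1 : ℤ) ≤ ((m:ℤ)+1 : ℤ) := by exact_mod_cast hle
      omega
  · rintro ⟨N, m, hm⟩
    exact ⟨m+1, by omega, hm.2⟩

lemma hitL_union_mono : Monotone (fun N : ℕ => ⋃ m, hitL Z k (N+1) m) := by
  intro N N' hNN'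
  refine Set.iUnion_mono (fun m => ?_)
  exact Set.inter_subset_inter (alive_upper_mono (by omega) m) le_rfl

end final
end RWaux

open RWaux in
/-- For a simple random walk with step distribution `P(Z = 1) = p`,
`P(Z = −1) = 1 − p`, the walk hits `−k` with probability `((1−p)/p)^k` when `p ≥ 1/2`. -/
theorem random_walk_hits_neg_k_of_ge_half
    {Ω : Type*} [MeasurableSpace Ω] (μ : Measure Ω) [IsProbabilityMeasure μ]
    (p : ℝ) (hp1 : p ≤ 1) (hp : 1 / 2 ≤ p)
    (Z : ℕ → Ω → ℤ) (hmeas : ∀ i, Measurable (Z i))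
    (hindep : iIndepFun Z μ)
    (hvals : ∀ i, ∀ ω, Z i ω = 1 ∨ Z i ω = -1)
    (hone : ∀ i, μ {ω | Z i ω = 1} = ENNReal.ofReal p)
    (k : ℕ) (hk : 0 < k) :
    μ {ω | ∃ n : ℕ, 1 ≤ n ∧ (∑ i ∈ Finset.range n, Z i ω) = -(k : ℤ)} = ENNReal.ofReal (((1 - p) / p) ^ k) := by
  classical
  have hp0 : (0:ℝ) < p := by linarith
  have hq0 : (0:ℝ) ≤ (1-p)/p := div_nonneg (by linarith) hp0.le
  have hAeq : {ω : Ω | ∃ n : ℕ, 1 ≤ n ∧ (∑ i ∈ Finset.range n, Z i ω) = -(k : ℤ)}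
      = ⋃ N : ℕ, ⋃ m, hitL Z k (N+1) m := by
    rw [show {ω : Ω | ∃ n : ℕ, 1 ≤ n ∧ (∑ i ∈ Finset.range n, Z i ω) = -(k : ℤ)}
      = {ω : Ω | ∃ n : ℕ, 1 ≤ n ∧ S Z n ω = -(k:ℤ)} from rfl]
    exact A_eq_union hvals hk
  rw [hAeq, Directed.measure_iUnion ((hitL_union_mono hvals hk).directed_le)]
  rcases eq_or_lt_of_le hp with hphalf | hplt
  · -- p = 1/2
    have hpeq : p = 1/2 := hphalf.symm
    have htarget : ENNReal.ofReal (((1 - p) / p) ^ k) = 1 := by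
      rw [hpeq]
      norm_num
    rw [htarget]
    refine le_antisymm (iSup_le (fun N => prob_le_one)) ?_
    refine ENNReal.le_of_forall_pos_le_add (fun ε hε _ => ?_)
    obtain ⟨M, hM⟩ := ENNReal.exists_nat_gt (show (k : ℝ≥0∞) / (ε:ℝ≥0∞) ≠ ∞ from
      (ENNReal.div_lt_top (ENNReal.natCast_ne_top _) (by exact_mod_cast hε.ne')).ne)
    have hkM : (k : ℝ≥0∞) ≤ (ε:ℝ≥0∞) * M := by
      rw [ENNReal.div_lt_iff (Or.inl (by exact_mod_cast hε.ne')) (Or.inl ENNReal.coe_ne_top)]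
        at hM
      exact hM.le.trans (le_of_eq (mul_comm _ _))
    have hB : 0 < M + 1 := Nat.succ_pos M
    have hnull := aliveAll_null (B := M+1) μ p hp0 hp1 hmeas hindep hone hk hB
    have hpart := hit_partition (B := M+1) μ hmeas hvals hk hB hnull
    have hH := hitH_half (B := M+1) μ p hp hp1 hmeas hindep hvals hone hk hB hpeq
    have hdivle : (k : ℝ≥0∞) / (((M+1)+k : ℕ) : ℝ≥0∞) ≤ (ε:ℝ≥0∞) := by
      refine ENNReal.div_le_of_le_mul ?_
      refine hkM.trans (mul_le_mul_right ?_ _)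
      exact Nat.cast_le.2 (by omega)
    calc (1:ℝ≥0∞) = μ (⋃ m, hitL Z k (M+1) m) + μ (⋃ m, hitH Z k (M+1) m) := hpart.symm
      _ = μ (⋃ m, hitL Z k (M+1) m) + (k : ℝ≥0∞) / (((M+1)+k : ℕ) : ℝ≥0∞) := by rw [hH]
      _ ≤ (⨆ N : ℕ, μ (⋃ m, hitL Z k (N+1) m)) + (ε:ℝ≥0∞) := by
          exact add_le_add (le_iSup (fun N : ℕ => μ (⋃ m, hitL Z k (N+1) m)) M) hdivle
  · -- 1/2 < p
    set r : ℝ≥0∞ := ENNReal.ofReal ((1-p)/p) with hrdef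
    have hr1 : r < 1 := by
      rw [hrdef]
      exact ENNReal.ofReal_lt_one.2 (by rw [div_lt_one hp0]; linarith)
    have htarget : ENNReal.ofReal (((1 - p) / p) ^ k) = r ^ k := by
      rw [hrdef, ENNReal.ofReal_pow hq0]
    rw [htarget]
    have hkey : ∀ N : ℕ, μ (⋃ m, hitL Z k (N+1) m)
        + r^((N+1)+k) * μ (⋃ m, hitH Z k (N+1) m) = r^k := fun N =>
      hitL_r_eq (B := N+1) μ p hp hp1 hmeas hindep hvals hone hk (Nat.succ_pos N)
    refine le_antisymm (iSup_le (fun N => ?_)) ?_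
    · rw [← hkey N]
      exact le_self_add
    · refine ENNReal.le_of_forall_pos_le_add (fun ε hε _ => ?_)
      have htend := ENNReal.tendsto_pow_atTop_nhds_zero_of_lt_one hr1
      have hev := htend.eventually (gt_mem_nhds (show (0:ℝ≥0∞) < (ε:ℝ≥0∞) from
        by exact_mod_cast hε))
      obtain ⟨n₀, hn₀⟩ := Filter.eventually_atTop.1 hev
      have hbound := hkey n₀
      have h1 : r^((n₀+1)+k) * μ (⋃ m, hitH Z k (n₀+1) m) ≤ (ε:ℝ≥0∞) := by
        refine le_trans (mul_le_mul_right prob_le_one _) ?_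
        rw [mul_one]
        exact (hn₀ ((n₀+1)+k) (by omega)).le
      calc r^k = μ (⋃ m, hitL Z k (n₀+1) m)
            + r^((n₀+1)+k) * μ (⋃ m, hitH Z k (n₀+1) m) := (hkey n₀).symm
        _ ≤ (⨆ N : ℕ, μ (⋃ m, hitL Z k (N+1) m)) + (ε:ℝ≥0∞) :=
            add_le_add (le_iSup (fun N : ℕ => μ (⋃ m, hitL Z k (N+1) m)) n₀) h1
end

section
/- Let (Zₙ) be a Markov chain with finite state space S. Then for every pair of states i, j ∈ S, the Cesàro limit lim_{n→∞} (1/n) · Σ_{k=0}^{n−1} P(Zₖ = j | Z₀ = i) exists. -/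
open Filter

section Aux

variable {S : Type*} [Fintype S] [DecidableEq S]

/-- Powers of a row-stochastic matrix are row-stochastic. -/
lemma pow_stochastic (P : Matrix S S ℝ) (hnonneg : ∀ i j, 0 ≤ P i j)
    (hrow : ∀ i, ∑ j, P i j = 1) (k : ℕ) :
    (∀ i j, 0 ≤ (P ^ k) i j) ∧ (∀ i, ∑ j, (P ^ k) i j = 1) := by
  induction k with
  | zero =>
      constructor
      · intro i j
        simp only [pow_zero, Matrix.one_apply]
        split <;> norm_num
      · intro i
        simp [Matrix.one_apply, Finset.sum_ite_eq]
  | succ k ih =>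
      rw [pow_succ]
      constructor
      · intro i j
        rw [Matrix.mul_apply]
        exact Finset.sum_nonneg fun l _ => mul_nonneg (ih.1 i l) (hnonneg l j)
      · intro i
        simp only [Matrix.mul_apply]
        rw [Finset.sum_comm]
        calc ∑ l, ∑ j, (P ^ k) i l * P l j
            = ∑ l, (P ^ k) i l * ∑ j, P l j := by
              simp [Finset.mul_sum]
          _ = 1 := by simp [hrow, ih.2 i]

lemma pow_entry_le_one (P : Matrix S S ℝ) (hnonneg : ∀ i j, 0 ≤ P i j)
    (hrow : ∀ i, ∑ j, P i j = 1) (k : ℕ) (i j : S) : (P ^ k) i j ≤ 1 := by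
  have h := pow_stochastic P hnonneg hrow k
  calc (P ^ k) i j ≤ ∑ l, (P ^ k) i l :=
        Finset.single_le_sum (fun l _ => h.1 i l) (Finset.mem_univ j)
    _ = 1 := h.2 i

end Aux

/-- For a time-homogeneous Markov chain on a finite state space `S` with
transition matrix `P` (row-stochastic), the Cesàro limit
`lim (1/n) Σ_{k<n} (P^k)_{ij}` of the `k`-step transition probabilities
`P(Z_k = j | Z_0 = i)` exists for all states `i, j`. -/
theorem markov_cesaro_limit_exists
    {S : Type*} [Fintype S] [DecidableEq S]
    (P : Matrix S S ℝ) (hnonneg : ∀ i j, 0 ≤ P i j)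
    (hrow : ∀ i, ∑ j, P i j = 1) (i j : S) :
    ∃ L : ℝ, Tendsto (fun n : ℕ => (∑ k ∈ Finset.range n, (P ^ k) i j) / n)
      atTop (nhds L) := by
  classical
  -- the Cesàro averages
  set A : ℕ → Matrix S S ℝ := fun n => (n : ℝ)⁻¹ • ∑ k ∈ Finset.range n, P ^ k with hA
  have hpow := pow_stochastic P hnonneg hrow
  have hpow_le := pow_entry_le_one P hnonneg hrow
  -- entries of A n lie in [0,1]
  have hAmem : ∀ n, ∀ a b : S, A n a b ∈ Set.Icc (0:ℝ) 1 := by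
    intro n a b
    have hsum : A n a b = (n : ℝ)⁻¹ * ∑ k ∈ Finset.range n, (P ^ k) a b := by
      simp [hA, Matrix.smul_apply, Matrix.sum_apply]
    constructor
    · rw [hsum]
      exact mul_nonneg (by positivity)
        (Finset.sum_nonneg fun k _ => (hpow k).1 a b)
    · rw [hsum]
      rcases Nat.eq_zero_or_pos n with rfl | hn
      · simp
      · rw [inv_mul_le_iff₀ (by exact_mod_cast hn), mul_one]
        calc ∑ k ∈ Finset.range n, (P ^ k) a b
            ≤ ∑ k ∈ Finset.range n, 1 :=
              Finset.sum_le_sum fun k _ => hpow_le k a b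
          _ = (n : ℝ) := by simp
  -- the compact set of matrices with entries in [0,1]
  set K : Set (Matrix S S ℝ) :=
    Set.univ.pi fun _ : S => Set.univ.pi fun _ : S => Set.Icc (0:ℝ) 1 with hK
  have hKcompact : IsCompact K :=
    isCompact_univ_pi fun _ => isCompact_univ_pi fun _ => isCompact_Icc
  have hAinK : ∀ n, A n ∈ K := by
    intro n
    simp only [hK, Set.mem_pi, Set.mem_univ, forall_true_left]
    intro a _ b _
    exact hAmem n a b
  -- key algebraic identity:  A n * P = A n + n⁻¹ • (P^n - 1)  and same for P * A n
  have hshift : ∀ n : ℕ, ∑ k ∈ Finset.range n, P ^ (k + 1)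
      = (∑ k ∈ Finset.range n, P ^ k) + (P ^ n - 1) := by
    intro n
    have := Finset.sum_range_succ_comm (fun k => P ^ k) n
    have h1 : ∑ k ∈ Finset.range n, P ^ (k + 1)
        = ∑ k ∈ Finset.range (n + 1), P ^ k - 1 := by
      rw [Finset.sum_range_succ' (fun k => P ^ k) n]
      simp [add_sub_cancel_right]
    rw [h1, Finset.sum_range_succ]
    abel
  have hAP : ∀ n : ℕ, A n * P = A n + (n : ℝ)⁻¹ • (P ^ n - 1) := by
    intro n
    simp only [hA, Matrix.smul_mul, Finset.sum_mul, ← pow_succ]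
    rw [hshift n, smul_add]
  have hPA : ∀ n : ℕ, P * A n = A n + (n : ℝ)⁻¹ • (P ^ n - 1) := by
    intro n
    simp only [hA, Matrix.mul_smul, Finset.mul_sum, ← pow_succ']
    rw [hshift n, smul_add]
  -- the error term tends to 0 along any sequence tending to atTop
  have herr : ∀ ψ : ℕ → ℕ, Tendsto ψ atTop atTop →
      Tendsto (fun m => ((ψ m : ℝ))⁻¹ • (P ^ (ψ m) - 1)) atTop (nhds 0) := by
    intro ψ hψ
    refine tendsto_pi_nhds.2 ?_
    intro a
    refine tendsto_pi_nhds.2 ?_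
    intro b
    simp only [Matrix.smul_apply, Matrix.sub_apply, smul_eq_mul]
    have hbound : ∀ m, ‖((ψ m : ℝ))⁻¹ * ((P ^ (ψ m)) a b - (1 : Matrix S S ℝ) a b)‖
        ≤ ((ψ m : ℝ))⁻¹ := by
      intro m
      rw [norm_mul, norm_inv]
      have h1 : ‖(P ^ (ψ m)) a b - (1 : Matrix S S ℝ) a b‖ ≤ 1 := by
        rw [Real.norm_eq_abs, abs_sub_le_iff]
        have h0 : (0:ℝ) ≤ (1 : Matrix S S ℝ) a b := by
          simp only [Matrix.one_apply]; split <;> norm_num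
        have h1' : (1 : Matrix S S ℝ) a b ≤ 1 := by
          simp only [Matrix.one_apply]; split <;> norm_num
        constructor
        · linarith [hpow_le (ψ m) a b]
        · linarith [(hpow (ψ m)).1 a b]
      calc ‖((ψ m : ℝ))‖⁻¹ * ‖(P ^ (ψ m)) a b - (1 : Matrix S S ℝ) a b‖
          ≤ ‖((ψ m : ℝ))‖⁻¹ * 1 := by
            apply mul_le_mul_of_nonneg_left h1 (by positivity)
        _ = ((ψ m : ℝ))⁻¹ := by
            rw [mul_one, Real.norm_eq_abs, abs_of_nonneg (by positivity)]
    have hg : Tendsto (fun m => ((ψ m : ℝ))⁻¹) atTop (nhds 0) :=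
      tendsto_inv_atTop_zero.comp ((tendsto_natCast_atTop_atTop).comp hψ)
    have h0 : (0:ℝ) = (0 : Matrix S S ℝ) a b := by simp
    rw [← h0]
    exact squeeze_zero_norm hbound hg
  -- any limit along a sequence going to infinity is P-invariant on both sides
  have hinv : ∀ (ψ : ℕ → ℕ) (Q : Matrix S S ℝ), Tendsto ψ atTop atTop →
      Tendsto (A ∘ ψ) atTop (nhds Q) → Q * P = Q ∧ P * Q = Q := by
    intro ψ Q hψ hlim
    have hmul : Tendsto (fun m => A (ψ m) * P) atTop (nhds (Q * P)) := by
      exact (Continuous.matrix_mul continuous_id continuous_const).continuousAt.tendsto.comp hlim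
    have hmul' : Tendsto (fun m => P * A (ψ m)) atTop (nhds (P * Q)) := by
      exact (Continuous.matrix_mul continuous_const continuous_id).continuousAt.tendsto.comp hlim
    have halt : Tendsto (fun m => A (ψ m) + ((ψ m : ℝ))⁻¹ • (P ^ (ψ m) - 1))
        atTop (nhds (Q + 0)) := hlim.add (herr ψ hψ)
    rw [add_zero] at halt
    constructor
    · refine tendsto_nhds_unique ?_ halt
      simpa only [hAP] using hmul
    · refine tendsto_nhds_unique ?_ halt
      simpa only [hPA] using hmul'
  -- invariance gives Q * A n = Q and A n * Q = Q for n ≥ 1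
  have hQpow : ∀ Q : Matrix S S ℝ, Q * P = Q → ∀ k, Q * P ^ k = Q := by
    intro Q hQ k
    induction k with
    | zero => simp
    | succ k ih => rw [pow_succ, ← Matrix.mul_assoc, ih, hQ]
  have hpowQ : ∀ Q : Matrix S S ℝ, P * Q = Q → ∀ k, P ^ k * Q = Q := by
    intro Q hQ k
    induction k with
    | zero => simp
    | succ k ih => rw [pow_succ', Matrix.mul_assoc, ih, hQ]
  have hQA : ∀ Q : Matrix S S ℝ, Q * P = Q → ∀ n : ℕ, 1 ≤ n → Q * A n = Q := by
    intro Q hQ n hn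
    simp only [hA, Matrix.mul_smul, Finset.mul_sum]
    have : ∀ k ∈ Finset.range n, Q * P ^ k = Q := fun k _ => hQpow Q hQ k
    rw [Finset.sum_congr rfl this, Finset.sum_const, Finset.card_range,
      ← Nat.cast_smul_eq_nsmul ℝ, smul_smul,
      inv_mul_cancel₀ (by exact_mod_cast Nat.one_le_iff_ne_zero.mp hn), one_smul]
  have hAQ : ∀ Q : Matrix S S ℝ, P * Q = Q → ∀ n : ℕ, 1 ≤ n → A n * Q = Q := by
    intro Q hQ n hn
    simp only [hA, Matrix.smul_mul, Finset.sum_mul]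
    have : ∀ k ∈ Finset.range n, P ^ k * Q = Q := fun k _ => hpowQ Q hQ k
    rw [Finset.sum_congr rfl this, Finset.sum_const, Finset.card_range,
      ← Nat.cast_smul_eq_nsmul ℝ, smul_smul,
      inv_mul_cancel₀ (by exact_mod_cast Nat.one_le_iff_ne_zero.mp hn), one_smul]
  haveI : FirstCountableTopology (Matrix S S ℝ) :=
    inferInstanceAs (FirstCountableTopology (S → S → ℝ))
  -- get one cluster point Q
  obtain ⟨Q, -, φ, hφ, hQlim⟩ := hKcompact.tendsto_subseq hAinK
  have hQinv := hinv φ Q hφ.tendsto_atTop hQlim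
  -- uniqueness of cluster points
  have huniq : ∀ (ψ : ℕ → ℕ) (Q' : Matrix S S ℝ), Tendsto ψ atTop atTop →
      Tendsto (A ∘ ψ) atTop (nhds Q') → Q' = Q := by
    intro ψ Q' hψ hlim'
    have hQ'inv := hinv ψ Q' hψ hlim'
    -- Q * Q' = Q  (since Q * A (ψ m) = Q eventually, and → Q * Q')
    have h1 : Tendsto (fun m => Q * A (ψ m)) atTop (nhds (Q * Q')) :=
      (Continuous.matrix_mul continuous_const continuous_id).continuousAt.tendsto.comp hlim'
    have h1' : Tendsto (fun m => Q * A (ψ m)) atTop (nhds Q) := by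
      apply Tendsto.congr' _ tendsto_const_nhds
      filter_upwards [hψ.eventually_ge_atTop 1] with m hm
      exact (hQA Q hQinv.1 (ψ m) hm).symm
    have hQQ' : Q * Q' = Q := tendsto_nhds_unique h1 h1'
    -- Q * Q' = Q' (since A (φ m) * Q' = Q' eventually, and → Q * Q')
    have h2 : Tendsto (fun m => A (φ m) * Q') atTop (nhds (Q * Q')) :=
      (Continuous.matrix_mul continuous_id continuous_const).continuousAt.tendsto.comp hQlim
    have h2' : Tendsto (fun m => A (φ m) * Q') atTop (nhds Q') := by
      apply Tendsto.congr' _ tendsto_const_nhds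
      filter_upwards [hφ.tendsto_atTop.eventually_ge_atTop 1] with m hm
      exact (hAQ Q' hQ'inv.2 (φ m) hm).symm
    have hQQ'2 : Q * Q' = Q' := tendsto_nhds_unique h2 h2'
    rw [← hQQ'2, hQQ']
  -- conclude A → Q
  have hAtendsto : Tendsto A atTop (nhds Q) := by
    apply tendsto_of_subseq_tendsto
    intro ns hns
    obtain ⟨Q', -, ms, hms, hlim'⟩ := hKcompact.tendsto_subseq (fun m => hAinK (ns m))
    have : Tendsto (A ∘ (ns ∘ ms)) atTop (nhds Q') := hlim'
    have hQ'Q : Q' = Q := huniq (ns ∘ ms) Q' (hns.comp hms.tendsto_atTop) this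
    exact ⟨ms, by rw [← hQ'Q]; exact this⟩
  -- extract the (i,j) entry
  refine ⟨Q i j, ?_⟩
  have hij : Tendsto (fun n => A n i j) atTop (nhds (Q i j)) :=
    tendsto_pi_nhds.mp (tendsto_pi_nhds.mp hAtendsto i) j
  apply hij.congr
  intro n
  simp [hA, Matrix.smul_apply, Matrix.sum_apply, div_eq_inv_mul]
end
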